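/- arXiv:math/0306179 — 2 statements merged into one kernel-verified Lean document; each statement's English description precedes it below -/
import Mathlib

section
/- Let S be a cofibrantly generated model category, (C, D) a pair of small categories and η : X → Y a morphism in S^C. (i) If c is an object of C and η is a (D ∪ {c})-weak equivalence, then X satisfies D-codescent at c if and only if Y satisfies D-codescent at c. (ii) If η is a C-weak equivalence, then X satisfies D-codescent if and only if Y satisfies D-codescent. -/
/-! Preliminaries: basic notions of homotopical algebra (lifting properties,
model structures, transfinite compositions, relative cell complexes, smallness,
cofibrant generation) and the relative model structure `U_S(C,D)` on functor
categories, following Balmer–Matthey, "Codescent theory I". -/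

universe w v u u₂ u₃

open CategoryTheory Limits

namespace Codescent

set_option linter.dupNamespace false

section Lifting

variable {M : Type u} [Category.{v} M]

/-- The class of morphisms having the left lifting property with respect to all
morphisms in `K`. -/
def llp (K : MorphismProperty M) : MorphismProperty M :=
  fun _ _ f => ∀ ⦃X Y : M⦄ (g : X ⟶ Y), K g → HasLiftingProperty f g

/-- The class of morphisms having the right lifting property with respect to all
morphisms in `K`. -/
def rlp (K : MorphismProperty M) : MorphismProperty M :=
  fun _ _ g => ∀ ⦃A B : M⦄ (f : A ⟶ B), K f → HasLiftingProperty f g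

/-- Intersection of two classes of morphisms. -/
def inter (P Q : MorphismProperty M) : MorphismProperty M :=
  fun _ _ f => P f ∧ Q f

/-- `f` is a retract of `g` (as objects of the arrow category). -/
def RetractHom {X Y X' Y' : M} (f : X ⟶ Y) (g : X' ⟶ Y') : Prop :=
  ∃ (i : Arrow.mk f ⟶ Arrow.mk g) (r : Arrow.mk g ⟶ Arrow.mk f), i ≫ r = 𝟙 (Arrow.mk f)

/-- The object `c` is a retract of the object `d`. -/
def IsRetractObj (c d : M) : Prop :=
  ∃ (i : c ⟶ d) (r : d ⟶ c), i ≫ r = 𝟙 c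

/-- A functorial factorization of every morphism as a morphism in `L` followed by
a morphism in `R`. -/
structure FunctorialFact (L R : MorphismProperty M) where
  Z : Arrow M ⥤ M
  ι : (Arrow.leftFunc : Arrow M ⥤ M) ⟶ Z
  π : Z ⟶ (Arrow.rightFunc : Arrow M ⥤ M)
  fac : ∀ f : Arrow M, ι.app f ≫ π.app f = f.hom
  mem_left : ∀ f : Arrow M, L (ι.app f)
  mem_right : ∀ f : Arrow M, R (π.app f)

end Lifting

/-- A (Quillen) model structure on a category `M`: classes of weak equivalences,
cofibrations and fibrations satisfying MC2–MC5 (MC1, completeness and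
cocompleteness, is imposed separately as `HasLimits`/`HasColimits`). -/
structure ModelStructure (M : Type u) [Category.{v} M] where
  weq : MorphismProperty M
  cof : MorphismProperty M
  fib : MorphismProperty M
  /-- MC2, two-out-of-three -/
  weq_comp : ∀ {X Y Z : M} (f : X ⟶ Y) (g : Y ⟶ Z), weq f → weq g → weq (f ≫ g)
  weq_cancel_left : ∀ {X Y Z : M} (f : X ⟶ Y) (g : Y ⟶ Z), weq f → weq (f ≫ g) → weq g
  weq_cancel_right : ∀ {X Y Z : M} (f : X ⟶ Y) (g : Y ⟶ Z), weq g → weq (f ≫ g) → weq f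
  /-- MC3, closure under retracts -/
  weq_retract : ∀ {X Y X' Y' : M} (f : X ⟶ Y) (g : X' ⟶ Y'), RetractHom f g → weq g → weq f
  cof_retract : ∀ {X Y X' Y' : M} (f : X ⟶ Y) (g : X' ⟶ Y'), RetractHom f g → cof g → cof f
  fib_retract : ∀ {X Y X' Y' : M} (f : X ⟶ Y) (g : X' ⟶ Y'), RetractHom f g → fib g → fib f
  /-- MC4, lifting -/
  cof_lift : ∀ {A B X Y : M} (f : A ⟶ B) (g : X ⟶ Y),
    cof f → weq g → fib g → HasLiftingProperty f g
  fib_lift : ∀ {A B X Y : M} (f : A ⟶ B) (g : X ⟶ Y),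
    weq f → cof f → fib g → HasLiftingProperty f g
  /-- MC5, functorial factorizations -/
  fact₁ : FunctorialFact (M := M) cof (inter weq fib)
  fact₂ : FunctorialFact (M := M) (inter weq cof) fib

section Transfinite

/-- A well-ordered type (with bottom element and successors), the index for
transfinite compositions (a "λ-sequence" index). -/
structure WOType : Type (w + 1) where
  carrier : Type w
  [lin : LinearOrder carrier]
  [succ : SuccOrder carrier]
  [bot : OrderBot carrier]
  [wf : WellFoundedLT carrier]

attribute [instance] WOType.lin WOType.succ WOType.bot WOType.wf

variable {M : Type u} [Category.{v} M] {N : Type u₂} [Category.{v} N]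

/-- The class of pushouts of morphisms of `K`. -/
def pushoutsOf (K : MorphismProperty M) : MorphismProperty M :=
  fun X Y f => ∃ (A B : M) (g : A ⟶ B) (t : A ⟶ X) (b : B ⟶ Y), K g ∧ IsPushout g t b f

/-- The inclusion functor of `{i // i < j}` into a preorder `J`. -/
def iioIncl {J : Type w} [Preorder J] (j : J) : {i : J // i < j} ⥤ J where
  obj i := i.1
  map {i i'} h := homOfLE (Subtype.coe_le_coe.mpr (leOfHom h))

/-- The cocone on the restriction of `F : J ⥤ M` to `{i // i < j}` with apex `F.obj j`. -/
def iioCocone {J : Type w} [Preorder J] (F : J ⥤ M) (j : J) : Cocone (iioIncl j ⋙ F) where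
  pt := F.obj j
  ι :=
    { app := fun i => F.map (homOfLE i.2.le)
      naturality := fun i i' h => by
        dsimp
        rw [Category.comp_id, ← F.map_comp]
        rfl }

/-- `F : J ⥤ M` is a (continuous) transfinite sequence all of whose successor
maps lie in the class `P`. -/
structure IsChainOf (P : MorphismProperty M) {J : Type w} [LinearOrder J] [SuccOrder J]
    (F : J ⥤ M) : Prop where
  succ_mem : ∀ j : J, ¬ IsMax j → P (F.map (homOfLE (Order.le_succ j)))
  limit_isColimit : ∀ j : J, Order.IsSuccLimit j → Nonempty (IsColimit (iioCocone F j))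

/-- The class of relative `K`-cells: transfinite compositions of pushouts of
morphisms of `K`. -/
def cell (K : MorphismProperty M) : MorphismProperty M :=
  fun X Y f => ∃ (J : WOType.{v}) (F : J.carrier ⥤ M)
    (_ : IsChainOf (pushoutsOf K) F) (c : Cocone F) (_ : IsColimit c)
    (e : X ≅ F.obj ⊥) (e' : c.pt ≅ Y), f = e.hom ≫ c.ι.app ⊥ ≫ e'.hom

/-- A linear order is `κ`-filtered when it has no top element and every subset of
cardinality at most `κ` is bounded above. -/
def KFiltered (κ : Cardinal.{w}) (J : Type w) [LinearOrder J] : Prop :=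
  (∀ j : J, ∃ j' : J, j < j') ∧
    ∀ s : Set J, Cardinal.mk s ≤ κ → ∃ j : J, ∀ i ∈ s, i ≤ j

/-- The object `d` is small relative to the class `K`: for some cardinal `κ`,
morphisms from `d` into the colimit of any `κ`-filtered well-ordered continuous
sequence with successor maps in `K` factor, essentially uniquely, through some
stage of the sequence. -/
def IsSmallRel (d : M) (K : MorphismProperty M) : Prop :=
  ∃ κ : Cardinal.{v}, ∀ (J : WOType.{v}), KFiltered κ J.carrier →
    ∀ (F : J.carrier ⥤ M), IsChainOf K F →
    ∀ (c : Cocone F), IsColimit c →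
      (∀ g : d ⟶ c.pt, ∃ (j : J.carrier) (h : d ⟶ F.obj j), h ≫ c.ι.app j = g) ∧
      (∀ (j j' : J.carrier) (h : d ⟶ F.obj j) (h' : d ⟶ F.obj j'),
        h ≫ c.ι.app j = h' ≫ c.ι.app j' →
          ∃ (k : J.carrier) (l : j ≤ k) (l' : j' ≤ k),
            h ≫ F.map (homOfLE l) = h' ≫ F.map (homOfLE l'))

/-- The model structure `P` is cofibrantly generated, with set of generating
cofibrations `I` and set of generating trivial cofibrations `J`. -/
structure IsCofGen (P : ModelStructure M) (I J : MorphismProperty M) : Prop where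
  small_I : ∀ ⦃X Y : M⦄ (f : X ⟶ Y), I f → IsSmallRel X (cell I)
  small_J : ∀ ⦃X Y : M⦄ (f : X ⟶ Y), J f → IsSmallRel X (cell J)
  fib_eq : P.fib = rlp J
  trivFib_eq : inter P.weq P.fib = rlp I

/-- A functor preserves pushouts. -/
def PreservesPushouts (G : M ⥤ N) : Prop :=
  ∀ ⦃Z X Y P : M⦄ (f : Z ⟶ X) (g : Z ⟶ Y) (inl : X ⟶ P) (inr : Y ⟶ P),
    IsPushout f g inl inr → IsPushout (G.map f) (G.map g) (G.map inl) (G.map inr)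

/-- A functor preserves transfinite compositions: it preserves colimits of
diagrams indexed by well-ordered types. -/
def PreservesTransfiniteCompositions (G : M ⥤ N) : Prop :=
  ∀ (J : Type v) [LinearOrder J] [WellFoundedLT J] (F : J ⥤ M) (c : Cocone F),
    IsColimit c → Nonempty (IsColimit (G.mapCocone c))

/-- The image `{G(f) | f ∈ K}` of a class of morphisms under a functor. -/
def strictImage (G : M ⥤ N) (K : MorphismProperty M) : MorphismProperty N :=
  fun _ _ g => ∃ (A B : M) (f : A ⟶ B), K f ∧ Arrow.mk (G.map f) = Arrow.mk g

end Transfinite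

section CofRep

variable {M : Type u} [Category.{v} M]

/-- The cofibrant replacement of `X` given by the functorial factorization of
`∅ ⟶ X`. -/
noncomputable def cofRep (P : ModelStructure M) [HasInitial M] (X : M) : M :=
  P.fact₁.Z.obj (Arrow.mk (initial.to X))

/-- The canonical trivial fibration `QX ⟶ X` from the cofibrant replacement. -/
noncomputable def cofRepHom (P : ModelStructure M) [HasInitial M] (X : M) :
    cofRep P X ⟶ X :=
  P.fact₁.π.app (Arrow.mk (initial.to X))

/-- The functor `X ↦ (∅ ⟶ X)` to the arrow category. -/
noncomputable def toArrowInit (M : Type u) [Category.{v} M] [HasInitial M] : M ⥤ Arrow M where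
  obj X := Arrow.mk (initial.to X)
  map {X Y} f := Arrow.homMk (u := 𝟙 _) (v := f) (by apply initial.hom_ext)

/-- The cofibrant replacement functor of the model structure `P`. -/
noncomputable def qFunctor (P : ModelStructure M) [HasInitial M] : M ⥤ M :=
  toArrowInit M ⋙ P.fact₁.Z

end CofRep

section FunctorCat

variable {S : Type u} [Category.{v} S]

/-- The class of morphisms in `S^C` that belong objectwise on `D` to the class `P`;
for `P` the weak equivalences (resp. fibrations) of a model structure these are
the `D`-weak equivalences (resp. the `D`-fibrations). -/
def objProp {C : Type v} [SmallCategory C] (P : MorphismProperty S) (D : Set C) :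
    MorphismProperty (C ⥤ S) :=
  fun _ _ η => ∀ d ∈ D, P (η.app d)

/-- Trivial `D`-fibrations in `S^C`. -/
def dTrivFib {C : Type v} [SmallCategory C] (P : ModelStructure S) (D : Set C) :
    MorphismProperty (C ⥤ S) :=
  inter (objProp P.weq D) (objProp P.fib D)

/-- `D`-cofibrations in `S^C`: the morphisms having the left lifting property with
respect to all trivial `D`-fibrations. -/
def dCof {C : Type v} [SmallCategory C] (P : ModelStructure S) (D : Set C) :
    MorphismProperty (C ⥤ S) :=
  llp (dTrivFib P D)

variable [HasColimits S]

/-- `D`-cofibrant objects of `S^C`. -/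
def dCofibrant {C : Type v} [SmallCategory C] (P : ModelStructure S) (D : Set C)
    (X : C ⥤ S) : Prop :=
  dCof P D (initial.to X)

/-- The model structure `U_S(C,D)` on `S^C`: a model structure whose weak
equivalences are the `D`-weak equivalences, whose fibrations are the
`D`-fibrations and whose cofibrations are the `D`-cofibrations. -/
structure RelStructure (P : ModelStructure S) (C : Type v) [SmallCategory C] (D : Set C) where
  N : ModelStructure (C ⥤ S)
  weq_eq : N.weq = objProp P.weq D
  fib_eq : N.fib = objProp P.fib D
  cof_eq : N.cof = dCof P D

/-- `X` satisfies `D`-codescent at `c`: the cofibrant replacement morphism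
`Q_{C,D} X ⟶ X` in `U_S(C,D)` is a weak equivalence at `c`. -/
def CodescentAt {C : Type v} [SmallCategory C] (P : ModelStructure S) {D : Set C}
    (U : RelStructure P C D) (X : C ⥤ S) (c : C) : Prop :=
  P.weq ((cofRepHom U.N X).app c)

/-- `X` satisfies `D`-codescent: the cofibrant replacement morphism
`Q_{C,D} X ⟶ X` is a `C`-weak equivalence. -/
def Codescent {C : Type v} [SmallCategory C] (P : ModelStructure S) {D : Set C}
    (U : RelStructure P C D) (X : C ⥤ S) : Prop :=
  ∀ c : C, CodescentAt P U X c

/-- The coproduct property for weak equivalences. -/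
def CoproductProperty (P : ModelStructure S) : Prop :=
  ∀ (ι : Type v) (X Y : ι → S) (f : ∀ i, X i ⟶ Y i),
    (∀ i, P.weq (f i)) ↔ P.weq (Limits.Sigma.map f)

end FunctorCat

section Pairs

variable {A : Type v} [SmallCategory A] {C : Type v} [SmallCategory C]

/-- Two subsets of objects are retract equivalent. -/
def RetractEquiv (D D' : Set C) : Prop :=
  (∀ d ∈ D, ∃ d' ∈ D', IsRetractObj d d') ∧ (∀ d' ∈ D', ∃ d ∈ D, IsRetractObj d' d)

/-- `Φ : (A,B) ⟶ (C,D)` is left glossy. -/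
def LeftGlossy (Φ : A ⥤ C) (B : Set A) : Prop :=
  ∀ b ∈ B, ∃ (ι : Type v) (tgt : ι → A) (β : ∀ i, Φ.obj b ⟶ Φ.obj (tgt i)),
    (∀ i, tgt i ∈ B) ∧
      ∀ (a : A) (α : Φ.obj b ⟶ Φ.obj a),
        ∃! p : (i : ι) × (tgt i ⟶ a), β p.1 ≫ Φ.map p.2 = α

/-- `Φ : (A,B) ⟶ (C,D)` is right glossy. -/
def RightGlossy (Φ : A ⥤ C) (B : Set A) : Prop :=
  ∀ b ∈ B, ∃ (ι : Type v) (src : ι → A) (β : ∀ j, Φ.obj (src j) ⟶ Φ.obj b),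
    (∀ j, src j ∈ B) ∧
      ∀ (a : A) (α : Φ.obj a ⟶ Φ.obj b),
        ∃! p : (j : ι) × (a ⟶ src j), Φ.map p.2 ≫ β p.1 = α

/-- A subset of objects is left absorbant: the source of any morphism whose
target lies in the subset also lies in the subset. -/
def LeftAbsorbant (D : Set C) : Prop :=
  ∀ ⦃c c' : C⦄, (c ⟶ c') → c' ∈ D → c ∈ D

end Pairs

end Codescent
open Codescent


/-! Evaluation at `c` is left Quillen on `U_S(C,D)`: its right adjoint sends `p` to products of
copies of `p`, hence preserves fibrations. By Ken Brown's lemma it therefore carries the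
`D`-weak equivalence `Q_{C,D} η` between cofibrant objects to a weak equivalence, and
two-out-of-three in the naturality square of `Q_{C,D} ⟶ 𝟭` at `c` transfers codescent along `η`. -/

namespace Codescent

section

variable {M : Type*} [Category M]

lemma FunctorialFact.fac_mk {L R : MorphismProperty M} (F : FunctorialFact L R) {X Y : M}
    (f : X ⟶ Y) :
    (F.ι.app (Arrow.mk f) : X ⟶ F.Z.obj (Arrow.mk f)) ≫ (F.π.app (Arrow.mk f) : _ ⟶ Y) = f :=
  F.fac _

lemma retractHom_of_hasLiftingProperty_left {X Y Z : M} {f : X ⟶ Z} {i : X ⟶ Y}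
    {p : Y ⟶ Z} (h : i ≫ p = f) (_ : HasLiftingProperty f p) : RetractHom f i :=
  let r := RetractArrow.ofLeftLiftingProperty h
  ⟨r.i, r.r, r.retract⟩

lemma retractHom_of_hasLiftingProperty_right {X Y Z : M} {f : X ⟶ Z} {i : X ⟶ Y}
    {p : Y ⟶ Z} (h : i ≫ p = f) (_ : HasLiftingProperty i f) : RetractHom f p :=
  let r := RetractArrow.ofRightLiftingProperty h
  ⟨r.i, r.r, r.retract⟩

namespace ModelStructure

variable (P : ModelStructure M)

lemma weq_id_of_weq_src {X Y : M} {f : X ⟶ Y} (hf : P.weq f) : P.weq (𝟙 X) :=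
  P.weq_cancel_right (𝟙 X) f hf (by rwa [Category.id_comp])

lemma weq_id_of_weq_tgt {X Y : M} {f : X ⟶ Y} (hf : P.weq f) : P.weq (𝟙 Y) :=
  P.weq_cancel_left f (𝟙 Y) hf (by rwa [Category.comp_id])

lemma weq_iff_of_comp_eq {X Y X' Y' : M} {f : X ⟶ Y} {g : X' ⟶ Y'} {a : X ⟶ X'}
    {b : Y ⟶ Y'} (h : a ≫ g = f ≫ b) (ha : P.weq a) (hb : P.weq b) :
    P.weq f ↔ P.weq g :=
  ⟨fun hf => P.weq_cancel_left a g ha (h ▸ P.weq_comp f b hf hb),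
    fun hg => P.weq_cancel_right f b hb (h ▸ P.weq_comp a g ha hg)⟩

lemma weq_of_hasLiftingProperty_fib {X Y : M} (f : X ⟶ Y)
    (h : ∀ ⦃E B : M⦄ (p : E ⟶ B), P.fib p → HasLiftingProperty f p) : P.weq f :=
  P.weq_retract f _ (retractHom_of_hasLiftingProperty_left (P.fact₂.fac_mk f)
    (h _ (P.fact₂.mem_right _))) (P.fact₂.mem_left _).1

lemma fib_of_hasLiftingProperty_trivCof {X Y : M} (p : X ⟶ Y)
    (h : ∀ ⦃A B : M⦄ (f : A ⟶ B), P.weq f → P.cof f → HasLiftingProperty f p) :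
    P.fib p :=
  P.fib_retract p _ (retractHom_of_hasLiftingProperty_right (P.fact₂.fac_mk p)
    (h _ (P.fact₂.mem_left _).1 (P.fact₂.mem_left _).2)) (P.fact₂.mem_right _)

lemma cof_iff_llp {X Y : M} (f : X ⟶ Y) : P.cof f ↔ (inter P.weq P.fib).llp f :=
  ⟨fun hf _ _ p hp => P.cof_lift f p hf hp.1 hp.2, fun hf => P.cof_retract f _ (retractHom_of_hasLiftingProperty_left (P.fact₁.fac_mk f)
    (hf _ (P.fact₁.mem_right _))) (P.fact₁.mem_left _)⟩

lemma cof_comp {X Y Z : M} {f : X ⟶ Y} {g : Y ⟶ Z} (hf : P.cof f) (hg : P.cof g) :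
    P.cof (f ≫ g) := by
  rw [cof_iff_llp] at hf hg ⊢
  exact MorphismProperty.comp_mem _ f g hf hg

lemma cof_coprod_inl [HasInitial M] {A B : M} [HasBinaryCoproduct A B]
    (hB : P.cof (initial.to B)) : P.cof (coprod.inl : A ⟶ A ⨿ B) := by
  rw [cof_iff_llp] at hB ⊢
  exact MorphismProperty.IsStableUnderCobaseChange.of_isPushout
    (IsPushout.of_hasBinaryCoproduct' A B) hB

lemma cof_coprod_inr [HasInitial M] {A B : M} [HasBinaryCoproduct A B]
    (hA : P.cof (initial.to A)) : P.cof (coprod.inr : B ⟶ A ⨿ B) := by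
  rw [cof_iff_llp] at hA ⊢
  exact MorphismProperty.IsStableUnderCobaseChange.of_isPushout
    (IsPushout.of_hasBinaryCoproduct' A B).flip hA

lemma fib_piMap {ι : Type*} {E B : ι → M} [HasProduct E] [HasProduct B]
    (p : ∀ i, E i ⟶ B i) (hp : ∀ i, P.fib (p i)) : P.fib (Limits.Pi.map p) := by
  refine P.fib_of_hasLiftingProperty_trivCof _ fun _ _ f hw hc => ?_
  have := fun i => P.fib_lift f (p i) hw hc (hp i)
  infer_instance

/-- Ken Brown's lemma. -/
theorem map_weq_of_cofibrant {M' : Type*} [Category M'] [HasInitial M] [HasBinaryCoproducts M]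
    (P' : ModelStructure M') (F : M ⥤ M')
    (hF : ∀ ⦃A B : M⦄ (j : A ⟶ B), P.weq j → P.cof j → P'.weq (F.map j))
    {A B : M} {f : A ⟶ B} (hf : P.weq f)
    (hA : P.cof (initial.to A)) (hB : P.cof (initial.to B)) : P'.weq (F.map f) := by
  -- factor `(f, 𝟙) : A ⨿ B ⟶ B` as a cofibration `k` followed by a trivial fibration `q`
  let φ := Arrow.mk (coprod.desc f (𝟙 B))
  let k : A ⨿ B ⟶ P.fact₁.Z.obj φ := P.fact₁.ι.app φ
  let q : P.fact₁.Z.obj φ ⟶ B := P.fact₁.π.app φ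
  have hq : P.weq q := (P.fact₁.mem_right φ).1
  have hkq : k ≫ q = coprod.desc f (𝟙 B) := P.fact₁.fac_mk _
  have hA_q : (coprod.inl ≫ k) ≫ q = f := by
    rw [Category.assoc, hkq, coprod.inl_desc]
  have hB_q : (coprod.inr ≫ k) ≫ q = 𝟙 B := by
    rw [Category.assoc, hkq, coprod.inr_desc]
  have hFA : P'.weq (F.map (coprod.inl ≫ k)) :=
    hF _ (P.weq_cancel_right _ q hq (hA_q ▸ hf))
      (P.cof_comp (P.cof_coprod_inl hB) (P.fact₁.mem_left φ))
  have hFB : P'.weq (F.map (coprod.inr ≫ k)) :=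
    hF _ (P.weq_cancel_right _ q hq (hB_q ▸ P.weq_id_of_weq_tgt hq))
      (P.cof_comp (P.cof_coprod_inr hA) (P.fact₁.mem_left φ))
  have hFq : P'.weq (F.map q) := P'.weq_cancel_left _ _ hFB
    (by rw [← F.map_comp, hB_q, F.map_id]; exact P'.weq_id_of_weq_src hFB)
  rw [← hA_q, F.map_comp]
  exact P'.weq_comp _ _ hFA hFq

variable [HasInitial M]

lemma cof_initial_to_cofRep (X : M) : P.cof (initial.to (cofRep P X)) :=
  initial.hom_ext (initial.to _) (P.fact₁.ι.app (Arrow.mk (initial.to X))) ▸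
    P.fact₁.mem_left _

lemma weq_cofRepHom (X : M) : P.weq (cofRepHom P X) :=
  (P.fact₁.mem_right _).1

lemma qFunctor_map_comp_cofRepHom {X Y : M} (f : X ⟶ Y) :
    (qFunctor P).map f ≫ cofRepHom P Y = cofRepHom P X ≫ f :=
  P.fact₁.π.naturality ((toArrowInit M).map f)

lemma weq_qFunctor_map {X Y : M} {f : X ⟶ Y} (hf : P.weq f) : P.weq ((qFunctor P).map f) :=
  P.weq_cancel_right _ _ (P.weq_cofRepHom Y) (by
    rw [qFunctor_map_comp_cofRepHom]; exact P.weq_comp _ _ (P.weq_cofRepHom X) hf)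

end ModelStructure

end

namespace RelStructure

variable {S : Type u} [Category.{v} S] [HasLimits S] {P : ModelStructure S}
  {C : Type v} [SmallCategory C] {D : Set C} (U : RelStructure P C D)

lemma fib_evaluationRightAdjoint_map (c : C) {E B : S} {p : E ⟶ B} (hp : P.fib p) :
    U.N.fib ((evaluationRightAdjoint S c).map p) := by
  rw [U.fib_eq]
  intro d _
  have : ((evaluationRightAdjoint S c).map p).app d =
      (Limits.Pi.map fun _ : d ⟶ c => p : ∏ᶜ _ ⟶ ∏ᶜ _) :=
    Pi.hom_ext _ _ fun g => (Pi.lift_π _ g).trans (Pi.map_π (fun _ : d ⟶ c => p) g).symm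
  rw [this]
  exact P.fib_piMap _ fun _ => hp

lemma weq_app_of_trivCof {A B : C ⥤ S} {j : A ⟶ B} (hw : U.N.weq j) (hc : U.N.cof j) (c : C) :
    P.weq (j.app c) :=
  P.weq_of_hasLiftingProperty_fib _ fun _ _ p hp =>
    ((evaluationAdjunctionLeft S c).hasLiftingProperty_iff j p).mpr
      (U.N.fib_lift j _ hw hc (U.fib_evaluationRightAdjoint_map c hp))

variable [HasColimits S]

lemma weq_app_of_weq_of_cofibrant {A B : C ⥤ S} {f : A ⟶ B} (hf : U.N.weq f)
    (hA : U.N.cof (initial.to A)) (hB : U.N.cof (initial.to B)) (c : C) : P.weq (f.app c) :=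
  U.N.map_weq_of_cofibrant P ((evaluation C S).obj c)
    (fun _ _ _ hw hc => U.weq_app_of_trivCof hw hc c) hf hA hB

lemma codescentAt_iff_of_weq {X Y : C ⥤ S} {η : X ⟶ Y} (hD : objProp P.weq D η) {c : C}
    (hc : P.weq (η.app c)) : CodescentAt P U X c ↔ CodescentAt P U Y c := by
  have hQη : P.weq (((qFunctor U.N).map η).app c) :=
    U.weq_app_of_weq_of_cofibrant (U.N.weq_qFunctor_map (U.weq_eq ▸ hD))
      (U.N.cof_initial_to_cofRep X) (U.N.cof_initial_to_cofRep Y) c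
  exact P.weq_iff_of_comp_eq (NatTrans.congr_app (U.N.qFunctor_map_comp_cofRepHom η) c) hQη hc

end RelStructure

end Codescent

theorem statement_8_general {S : Type u} [Category.{v} S] [HasLimits S] [HasColimits S]
    (P : ModelStructure S)
    {C : Type v} [SmallCategory C] (D : Set C) (U : RelStructure P C D)
    {X Y : C ⥤ S} (η : X ⟶ Y) :
    (∀ c : C, objProp P.weq (insert c D) η →
      (CodescentAt P U X c ↔ CodescentAt P U Y c)) ∧
    (objProp P.weq Set.univ η → (Codescent P U X ↔ Codescent P U Y)) :=
  ⟨fun c hη => U.codescentAt_iff_of_weq (fun d hd => hη d (Set.mem_insert_of_mem c hd))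
      (hη c (Set.mem_insert c D)),
    fun hη => forall_congr' fun c =>
      U.codescentAt_iff_of_weq (fun d _ => hη d trivial) (hη c trivial)⟩

/-- weak invariance of codescent (Balmer–Matthey, Prop. 5.8). -/
theorem statement_8 {S : Type u} [Category.{v} S] [HasLimits S] [HasColimits S]
    (P : ModelStructure S) (I J : MorphismProperty S) (hcg : IsCofGen P I J)
    {C : Type v} [SmallCategory C] (D : Set C) (U : RelStructure P C D)
    {X Y : C ⥤ S} (η : X ⟶ Y) :
    (∀ c : C, objProp P.weq (insert c D) η →
      (CodescentAt P U X c ↔ CodescentAt P U Y c)) ∧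
    (objProp P.weq Set.univ η → (Codescent P U X ↔ Codescent P U Y)) :=
  statement_8_general P D U η
end

section
/- Let F : S ⇄ T : U be a Quillen adjunction between cofibrantly generated model categories, C a small category and D a subset of the objects of C. Then the pair of functors F^C : S^C ⇄ T^C : U^C, defined by postcomposition F^C(X) := F ∘ X and U^C(Y) := U ∘ Y, is a Quillen adjunction between the model categories U_S(C,D) and U_T(C,D). In particular, F^C preserves cofibrant objects and weak equivalences between cofibrant objects. -/
/-! Preliminaries: basic notions of homotopical algebra (lifting properties,
model structures, transfinite compositions, relative cell complexes, smallness,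
cofibrant generation) and the relative model structure `U_S(C,D)` on functor
categories, following Balmer–Matthey, "Codescent theory I". -/

universe w v u u₂ u₃

open CategoryTheory Limits

open Codescent

/-! The right adjoint `U` sends trivial fibrations to trivial fibrations: trivial fibrations are
exactly the maps with the right lifting property against cofibrations (retract argument), and
lifting problems transpose along `F ⊣ U`. Hence `U^C` preserves trivial `D`-fibrations, and
transposing along `F^C ⊣ U^C` shows that `F^C` preserves `D`-cofibrations. A `D`-cofibration
`η` is a cofibration at every object `d`, since evaluation at `d` has the right adjoint
`A ↦ (c ↦ ∏_{c ⟶ d} A)`, which sends trivial fibrations to objectwise trivial fibrations. The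
remaining claims then follow objectwise, the last one by Ken Brown's lemma for `F`. -/

namespace CategoryTheory.Adjunction

variable {C D : Type*} [Category C] [Category D] {F : C ⥤ D} {G : D ⥤ C}

lemma llp_le_inverseImage_llp (adj : F ⊣ G) {K : MorphismProperty C} {L : MorphismProperty D}
    (h : L ≤ K.inverseImage G) : K.llp ≤ L.llp.inverseImage F :=
  fun _ _ f hf _ _ g hg => (adj.hasLiftingProperty_iff f g).2 (hf _ (h _ hg))

lemma rlp_le_inverseImage_rlp (adj : F ⊣ G) {K : MorphismProperty C} {L : MorphismProperty D}
    (h : K ≤ L.inverseImage F) : L.rlp ≤ K.rlp.inverseImage G :=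
  fun _ _ g hg _ _ f hf => (adj.hasLiftingProperty_iff f g).1 (hg _ (h _ hf))

end CategoryTheory.Adjunction

namespace CategoryTheory.MorphismProperty

lemma initial_to_of_isInitial {C : Type*} [Category C] [HasInitial C] {W : MorphismProperty C}
    [W.RespectsIso] {A X : C} (hA : IsInitial A) (f : A ⟶ X) (hf : W f) : W (initial.to X) := by
  rw [initial.hom_ext (initial.to X) ((initialIsInitial.uniqueUpToIso hA).hom ≫ f)]
  exact RespectsIso.precomp W _ f hf

end CategoryTheory.MorphismProperty

namespace Codescent

lemma retractHom_of_retractArrow {M : Type*} [Category M] {X Y X' Y' : M} {f : X ⟶ Y}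
    {g : X' ⟶ Y'} (h : RetractArrow f g) : RetractHom f g :=
  ⟨h.i, h.r, h.retract⟩

lemma FunctorialFact.hasFactorization {M : Type*} [Category M] {L R : MorphismProperty M}
    (φ : FunctorialFact L R) : L.HasFactorization R :=
  ⟨fun f => ⟨{ Z := φ.Z.obj (Arrow.mk f)
               i := φ.ι.app (Arrow.mk f)
               p := φ.π.app (Arrow.mk f)
               fac := φ.fac (Arrow.mk f)
               hi := φ.mem_left (Arrow.mk f)
               hp := φ.mem_right (Arrow.mk f) }⟩⟩

namespace ModelStructure

variable {M : Type u} [Category.{v} M] (P : ModelStructure M)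

instance : P.weq.IsStableUnderRetracts :=
  ⟨fun h hg => P.weq_retract _ _ (retractHom_of_retractArrow h) hg⟩

instance : P.cof.IsStableUnderRetracts :=
  ⟨fun h hg => P.cof_retract _ _ (retractHom_of_retractArrow h) hg⟩

instance : (inter P.weq P.fib).IsStableUnderRetracts :=
  ⟨fun h hg => ⟨P.weq_retract _ _ (retractHom_of_retractArrow h) hg.1,
    P.fib_retract _ _ (retractHom_of_retractArrow h) hg.2⟩⟩

instance : MorphismProperty.HasFactorization P.cof (inter P.weq P.fib) :=
  P.fact₁.hasFactorization

instance : MorphismProperty.HasFactorization (inter P.weq P.cof) P.fib :=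
  P.fact₂.hasFactorization

lemma llp_trivFib : (inter P.weq P.fib).llp = P.cof :=
  MorphismProperty.llp_eq_of_le_llp_of_hasFactorization_of_isStableUnderRetracts
    fun _ _ f hf _ _ g hg => P.cof_lift f g hf hg.1 hg.2

lemma rlp_cof : P.cof.rlp = inter P.weq P.fib :=
  MorphismProperty.rlp_eq_of_le_rlp_of_hasFactorization_of_isStableUnderRetracts
    fun _ _ g hg _ _ f hf => P.cof_lift f g hf hg.1 hg.2

instance : P.cof.IsStableUnderCobaseChange := by
  rw [← llp_trivFib]
  infer_instance

instance : P.cof.RespectsIso := by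
  rw [← llp_trivFib]
  infer_instance

instance : P.cof.IsMultiplicative := by
  rw [← llp_trivFib]
  infer_instance

lemma weq_id (X : M) : P.weq (𝟙 X) :=
  let h := MorphismProperty.factorizationData (inter P.weq P.cof) P.fib (𝟙 X)
  MorphismProperty.of_retract (RetractArrow.ofLeftLiftingProperty h.fac) h.hi.1

variable {P} in
lemma trivFib_map_of_adjunction {N : Type*} [Category N] {Q : ModelStructure N} {F : M ⥤ N}
    {G : N ⥤ M} (adj : F ⊣ G) (hF : ∀ ⦃X Y : M⦄ (f : X ⟶ Y), P.cof f → Q.cof (F.map f))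
    {X Y : N} {g : X ⟶ Y} (hg : inter Q.weq Q.fib g) : inter P.weq P.fib (G.map g) := by
  rw [← Q.rlp_cof] at hg
  rw [← P.rlp_cof]
  exact adj.rlp_le_inverseImage_rlp hF g hg

def IsCofibrant [HasInitial M] (X : M) : Prop :=
  P.cof (initial.to X)

theorem weq_map_of_isCofibrant [HasInitial M] [HasBinaryCoproducts M] {N : Type u₂}
    [Category.{v} N] {Q : ModelStructure N} {F : M ⥤ N}
    (hF : ∀ ⦃X Y : M⦄ (f : X ⟶ Y), P.weq f → P.cof f → Q.weq (F.map f))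
    {A B : M} (hA : P.IsCofibrant A) (hB : P.IsCofibrant B) (f : A ⟶ B) (hf : P.weq f) :
    Q.weq (F.map f) := by
  -- factor `(f, 𝟙) : A ⨿ B ⟶ B` as a cofibration `i` followed by a trivial fibration `p`
  let h := MorphismProperty.factorizationData P.cof (inter P.weq P.fib) (coprod.desc f (𝟙 B))
  have hsq := IsPushout.of_hasBinaryCoproduct' A B
  have hinl : P.cof (coprod.inl ≫ h.i) :=
    P.cof.comp_mem _ _ (MorphismProperty.of_isPushout hsq hB) h.hi
  have hinr : P.cof (coprod.inr ≫ h.i) :=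
    P.cof.comp_mem _ _ (MorphismProperty.of_isPushout hsq.flip hA) h.hi
  have hinl_p : (coprod.inl ≫ h.i) ≫ h.p = f := by
    rw [Category.assoc, h.fac, coprod.inl_desc]
  have hinr_p : (coprod.inr ≫ h.i) ≫ h.p = 𝟙 B := by
    rw [Category.assoc, h.fac, coprod.inr_desc]
  have hwinl : P.weq (coprod.inl ≫ h.i) :=
    P.weq_cancel_right _ _ h.hp.1 (by rwa [hinl_p])
  have hwinr : P.weq (coprod.inr ≫ h.i) :=
    P.weq_cancel_right _ _ h.hp.1 (by rw [hinr_p]; exact P.weq_id B)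
  have hFp : Q.weq (F.map h.p) := by
    refine Q.weq_cancel_left _ _ (hF _ hwinr hinr) ?_
    rw [← F.map_comp, hinr_p, F.map_id]
    exact Q.weq_id _
  simpa only [← F.map_comp, hinl_p] using Q.weq_comp _ _ (hF _ hwinl hinl) hFp

end ModelStructure

section FunctorCategory

variable {S : Type u} [Category.{v} S] {P : ModelStructure S}

lemma trivFib_piMap {ι : Type*} {A B : S} [HasProduct fun _ : ι => A]
    [HasProduct fun _ : ι => B] {g : A ⟶ B} (hg : inter P.weq P.fib g) :
    inter P.weq P.fib (Limits.Pi.map fun _ : ι => g) := by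
  rw [← P.rlp_cof] at hg ⊢
  exact MorphismProperty.limMap _ fun _ => hg

variable {C : Type v} [SmallCategory C] {D : Set C}

instance : (dCof P D).RespectsIso :=
  inferInstanceAs (dTrivFib P D).llp.RespectsIso

lemma dCof_le_inverseImage_dCof {T : Type*} [Category T] {Q : ModelStructure T} {F : S ⥤ T}
    {G : T ⥤ S} (adj : F ⊣ G) (hF : ∀ ⦃X Y : S⦄ (f : X ⟶ Y), P.cof f → Q.cof (F.map f)) :
    dCof P D ≤ (dCof Q D).inverseImage ((Functor.whiskeringRight C S T).obj F) := by
  refine (adj.whiskerRight C).llp_le_inverseImage_llp fun _ _ g hg => ?_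
  have hg' : ∀ d ∈ D, inter P.weq P.fib (G.map (g.app d)) := fun d hd =>
    ModelStructure.trivFib_map_of_adjunction adj hF ⟨hg.1 d hd, hg.2 d hd⟩
  exact ⟨fun d hd => (hg' d hd).1, fun d hd => (hg' d hd).2⟩

variable [HasLimits S]

lemma cof_app_of_dCof {X Y : C ⥤ S} {η : X ⟶ Y} (hη : dCof P D η) (d : C) :
    P.cof (η.app d) := by
  rw [← P.llp_trivFib]
  refine (evaluationAdjunctionLeft S d).llp_le_inverseImage_llp (fun A B g hg => ?_) η hη
  have hg' : ∀ c, inter P.weq P.fib (Pi.lift fun f : c ⟶ d => Pi.π (fun _ => A) f ≫ g) := by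
    intro c
    rw [show (Pi.lift fun f : c ⟶ d => Pi.π (fun _ => A) f ≫ g) = Limits.Pi.map fun _ => g by
      ext; simp]
    exact trivFib_piMap hg
  exact ⟨fun c _ => (hg' c).1, fun c _ => (hg' c).2⟩

lemma isCofibrant_obj_of_dCofibrant [HasColimits S] {X : C ⥤ S} (hX : dCofibrant P D X)
    (d : C) : P.IsCofibrant (X.obj d) :=
  MorphismProperty.initial_to_of_isInitial
    (initialIsInitial.isInitialObj ((evaluation C S).obj d) _) _ (cof_app_of_dCof hX d)

end FunctorCategory

end Codescent


theorem statement_9_general {S : Type u} [Category.{v} S] [HasLimits S] [HasColimits S]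
    {T : Type u₂} [Category.{v} T] [HasColimits T]
    (P : ModelStructure S)
    (Q : ModelStructure T)
    (F : S ⥤ T) (U : T ⥤ S) (adj : F ⊣ U)
    (hFcof : ∀ ⦃X Y : S⦄ (f : X ⟶ Y), P.cof f → Q.cof (F.map f))
    (hFtriv : ∀ ⦃X Y : S⦄ (f : X ⟶ Y), P.weq f → P.cof f →
      Q.weq (F.map f) ∧ Q.cof (F.map f))
    (C : Type v) [SmallCategory C] (D : Set C) :
    Nonempty ((Functor.whiskeringRight C S T).obj F ⊣ (Functor.whiskeringRight C T S).obj U) ∧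
    (∀ ⦃X Y : C ⥤ S⦄ (η : X ⟶ Y), dCof P D η →
      dCof Q D (((Functor.whiskeringRight C S T).obj F).map η)) ∧
    (∀ ⦃X Y : C ⥤ S⦄ (η : X ⟶ Y), objProp P.weq D η → dCof P D η →
      objProp Q.weq D (((Functor.whiskeringRight C S T).obj F).map η) ∧
        dCof Q D (((Functor.whiskeringRight C S T).obj F).map η)) ∧
    (∀ X : C ⥤ S, dCofibrant P D X →
      dCofibrant Q D (((Functor.whiskeringRight C S T).obj F).obj X)) ∧
    (∀ ⦃X Y : C ⥤ S⦄ (η : X ⟶ Y), dCofibrant P D X → dCofibrant P D Y →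
      objProp P.weq D η →
      objProp Q.weq D (((Functor.whiskeringRight C S T).obj F).map η)) := by
  have hFC : dCof P D ≤ (dCof Q D).inverseImage ((Functor.whiskeringRight C S T).obj F) :=
    dCof_le_inverseImage_dCof adj hFcof
  refine ⟨⟨adj.whiskerRight C⟩, hFC, ?_, fun X hX => ?_, ?_⟩
  · exact fun _ _ η hw hη =>
      ⟨fun d hd => (hFtriv _ (hw d hd) (cof_app_of_dCof hη d)).1, hFC η hη⟩
  · have := (adj.whiskerRight C).isLeftAdjoint
    exact MorphismProperty.initial_to_of_isInitial (initialIsInitial.isInitialObj _ _) _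
      (hFC (initial.to X) hX)
  · exact fun _ _ η hX hY hw d hd =>
      P.weq_map_of_isCofibrant (fun _ _ f hw hc => (hFtriv f hw hc).1)
        (isCofibrant_obj_of_dCofibrant hX d) (isCofibrant_obj_of_dCofibrant hY d) _ (hw d hd)

/-- a Quillen adjunction `F ⊣ U` induces a Quillen adjunction
`F^C ⊣ U^C` between `U_S(C,D)` and `U_T(C,D)` (Balmer–Matthey, Prop. 6.1). -/
theorem statement_9 {S : Type u} [Category.{v} S] [HasLimits S] [HasColimits S]
    {T : Type u₂} [Category.{v} T] [HasLimits T] [HasColimits T]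
    (P : ModelStructure S) (I J : MorphismProperty S) (hcgS : IsCofGen P I J)
    (Q : ModelStructure T) (I' J' : MorphismProperty T) (hcgT : IsCofGen Q I' J')
    (F : S ⥤ T) (U : T ⥤ S) (adj : F ⊣ U)
    (hFcof : ∀ ⦃X Y : S⦄ (f : X ⟶ Y), P.cof f → Q.cof (F.map f))
    (hFtriv : ∀ ⦃X Y : S⦄ (f : X ⟶ Y), P.weq f → P.cof f →
      Q.weq (F.map f) ∧ Q.cof (F.map f))
    (C : Type v) [SmallCategory C] (D : Set C) :
    Nonempty ((Functor.whiskeringRight C S T).obj F ⊣ (Functor.whiskeringRight C T S).obj U) ∧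
    (∀ ⦃X Y : C ⥤ S⦄ (η : X ⟶ Y), dCof P D η →
      dCof Q D (((Functor.whiskeringRight C S T).obj F).map η)) ∧
    (∀ ⦃X Y : C ⥤ S⦄ (η : X ⟶ Y), objProp P.weq D η → dCof P D η →
      objProp Q.weq D (((Functor.whiskeringRight C S T).obj F).map η) ∧
        dCof Q D (((Functor.whiskeringRight C S T).obj F).map η)) ∧
    (∀ X : C ⥤ S, dCofibrant P D X →
      dCofibrant Q D (((Functor.whiskeringRight C S T).obj F).obj X)) ∧
    (∀ ⦃X Y : C ⥤ S⦄ (η : X ⟶ Y), dCofibrant P D X → dCofibrant P D Y →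
      objProp P.weq D η →
      objProp Q.weq D (((Functor.whiskeringRight C S T).obj F).map η)) :=
  statement_9_general P Q F U adj hFcof hFtriv C D
end
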